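/- The map f ↦ ‖V_f‖ is a norm on L¹([0,1]). In particular (the nontrivial point), if f ∈ L¹([0,1]) and V_f ρ = 0 in L²([0,1]) for every ρ ∈ L²([0,1]), then f = 0 almost everywhere on [0,1]. -/

import Mathlib

open MeasureTheory
open scoped ENNReal

noncomputable section

/-- Lebesgue measure restricted to `[0,1]`. -/
def μ01 : Measure ℝ := volume.restrict (Set.Icc (0:ℝ) 1)

/-- `L²([0,1])` over `ℂ`. -/
abbrev L2 : Type := Lp ℂ 2 μ01

/-!
`V_f` is additive and homogeneous in `f`, so `V_{f+g} = V_f + V_g` and `V_{c f} = c V_f`, and the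
first two claims are the triangle inequality and homogeneity of the operator norm. For
definiteness, apply `V_f` to the constant function `1`: `(V_f 1)(x) = ∫_0^x f(x - t) dt = ∫_0^x f`,
so the primitive of `f` vanishes a.e. on `[0,1]`, hence everywhere on `(0,1)` by continuity, and
the Lebesgue differentiation theorem gives `f = 0` a.e.
-/

open Filter Set
open scoped Topology

section Primitive

variable {E : Type*} [NormedAddCommGroup E] [NormedSpace ℝ E] [CompleteSpace E]

theorem ae_restrict_Icc_eq_zero_of_integral_eq_zero {f : ℝ → E} {a b : ℝ}
    (hf : IntervalIntegrable f volume a b)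
    (h : ∀ᵐ x ∂volume.restrict (Icc a b), ∫ t in a..x, f t = 0) :
    f =ᵐ[volume.restrict (Icc a b)] 0 := by
  rw [Measure.restrict_congr_set Ioo_ae_eq_Icc.symm] at h ⊢
  have hprim : EqOn (fun x => ∫ t in a..x, f t) 0 (Ioo a b) :=
    Measure.eqOn_open_of_ae_eq h isOpen_Ioo
      ((intervalIntegral.continuousOn_primitive_interval' hf left_mem_uIcc).mono
        (Ioo_subset_Icc_self.trans Icc_subset_uIcc))
      continuousOn_const
  filter_upwards [ae_restrict_of_ae hf.ae_hasDerivAt_integral,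
    ae_restrict_mem measurableSet_Ioo] with x hderiv hx
  have hlocal : (fun x => ∫ t in a..x, f t) =ᶠ[𝓝 x] fun _ => 0 :=
    eventually_of_mem (isOpen_Ioo.mem_nhds hx) hprim
  exact ((hderiv (Icc_subset_uIcc (Ioo_subset_Icc_self hx)) a left_mem_uIcc).congr_of_eventuallyEq
    hlocal.symm).unique (hasDerivAt_const x 0)

end Primitive

theorem ae_restrict_Icc_intervalIntegrable_mul_comp_sub {R : Type*} [NormedRing R]
    [NormedAlgebra ℝ R] {f ρ : ℝ → R} {b : ℝ}
    (hf : IntegrableOn f (Icc 0 b)) (hρ : IntegrableOn ρ (Icc 0 b)) :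
    ∀ᵐ x ∂volume.restrict (Icc 0 b),
      IntervalIntegrable (fun t => f (x - t) * ρ t) volume 0 x := by
  -- on `[0, x]` the integrand is that of the convolution of the extensions of `ρ` and `f` by zero
  have hconv := (hρ.integrable_indicator measurableSet_Icc).ae_convolution_exists
    (L := (ContinuousLinearMap.mul ℝ R).flip) (hf.integrable_indicator measurableSet_Icc)
  filter_upwards [ae_restrict_of_ae hconv, ae_restrict_mem measurableSet_Icc] with x hx hxmem
  rw [intervalIntegrable_iff_integrableOn_Ioc_of_le hxmem.1]
  refine (hx.integrableOn (s := Ioc 0 x)).congr_fun (fun t ht => ?_) measurableSet_Ioc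
  have ht₀ : t ∈ Icc 0 b := ⟨ht.1.le, ht.2.trans hxmem.2⟩
  have ht₁ : x - t ∈ Icc 0 b := ⟨by linarith [ht.2], by linarith [ht.1, hxmem.2]⟩
  simp only [ContinuousLinearMap.flip_apply, ContinuousLinearMap.mul_apply',
    indicator_of_mem ht₀, indicator_of_mem ht₁]

instance isFiniteMeasure_μ01 : IsFiniteMeasure μ01 := by
  unfold μ01
  infer_instance

variable {p : ℝ≥0∞} [Fact (1 ≤ p)]

def IsVolterraConvolution (V : Lp ℂ p μ01 →L[ℂ] Lp ℂ p μ01) (f : ℝ → ℂ) : Prop :=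
  ∀ ρ, ∀ᵐ x ∂μ01, V ρ x = ∫ t in (0:ℝ)..x, f (x - t) * ρ t

namespace IsVolterraConvolution

variable {V W : Lp ℂ p μ01 →L[ℂ] Lp ℂ p μ01} {f g : ℝ → ℂ}

theorem unique (hV : IsVolterraConvolution V f) (hW : IsVolterraConvolution W f) : V = W :=
  ContinuousLinearMap.ext fun ρ => Lp.ext <| by
    filter_upwards [hV ρ, hW ρ] with x hVx hWx
    rw [hVx, hWx]

theorem smul (hV : IsVolterraConvolution V f) (c : ℂ) :
    IsVolterraConvolution (c • V) (c • f) := fun ρ => by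
  filter_upwards [hV ρ, Lp.coeFn_smul c (V ρ)] with x hVx hsmul
  rw [smul_apply, hsmul, Pi.smul_apply, hVx, smul_eq_mul,
    ← intervalIntegral.integral_const_mul]
  simp only [Pi.smul_apply, smul_eq_mul, mul_assoc]

theorem add (hV : IsVolterraConvolution V f) (hW : IsVolterraConvolution W g)
    (hf : IntegrableOn f (Icc 0 1)) (hg : IntegrableOn g (Icc 0 1)) :
    IsVolterraConvolution (V + W) (f + g) := fun ρ => by
  have hρ : IntegrableOn ρ (Icc 0 1) := (Lp.memLp ρ).integrable Fact.out
  filter_upwards [hV ρ, hW ρ, Lp.coeFn_add (V ρ) (W ρ),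
    ae_restrict_Icc_intervalIntegrable_mul_comp_sub hf hρ,
    ae_restrict_Icc_intervalIntegrable_mul_comp_sub hg hρ] with x hVx hWx hadd hfρ hgρ
  rw [add_apply, hadd, Pi.add_apply, hVx, hWx,
    ← intervalIntegral.integral_add hfρ hgρ]
  simp only [Pi.add_apply, add_mul]

theorem ae_integral_eq_zero (hV : IsVolterraConvolution V f) (hzero : ∀ ρ, V ρ = 0) :
    ∀ᵐ x ∂μ01, ∫ t in (0:ℝ)..x, f t = 0 := by
  have hone := (ae_restrict_iff' measurableSet_Icc).1 (Lp.coeFn_const p μ01 (1 : ℂ))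
  filter_upwards [hV (Lp.const p μ01 1), Lp.coeFn_zero ℂ p μ01, ae_restrict_mem measurableSet_Icc]
    with x hVx hzero_x hx
  calc ∫ t in (0:ℝ)..x, f t = ∫ t in (0:ℝ)..x, f (x - t) := by
        simp [intervalIntegral.integral_comp_sub_left]
    _ = ∫ t in (0:ℝ)..x, f (x - t) * (Lp.const p μ01 (1 : ℂ) : ℝ → ℂ) t := by
        refine intervalIntegral.integral_congr_ae ?_
        filter_upwards [hone] with t hone_t ht
        rw [uIoc_of_le hx.1] at ht
        rw [hone_t ⟨ht.1.le, ht.2.trans hx.2⟩, Function.const_apply, mul_one]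
    _ = 0 := by rw [← hVx, hzero, hzero_x, Pi.zero_apply]

end IsVolterraConvolution

/-- The map `f ↦ ‖V_f‖` is a norm on `L¹[0,1]`: it satisfies the triangle inequality
(`‖V_{f+g}‖ ≤ ‖V_f‖ + ‖V_g‖`), absolute homogeneity (`‖V_{c f}‖ = |c| ‖V_f‖`), and — the
nontrivial point — definiteness: if `V_f ρ = 0` for every `ρ ∈ L²[0,1]`, then `f = 0`
almost everywhere on `[0,1]`. -/
theorem Vf_norm (f g : ℝ → ℂ) (c : ℂ)
    (hf : IntegrableOn f (Set.Icc 0 1)) (hg : IntegrableOn g (Set.Icc 0 1))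
    (Vf Vg Vfg Vcf : L2 →L[ℂ] L2)
    (hVf : ∀ ρ : L2, ∀ᵐ x ∂μ01, (Vf ρ) x = ∫ t in (0:ℝ)..x, f (x - t) * ρ t)
    (hVg : ∀ ρ : L2, ∀ᵐ x ∂μ01, (Vg ρ) x = ∫ t in (0:ℝ)..x, g (x - t) * ρ t)
    (hVfg : ∀ ρ : L2, ∀ᵐ x ∂μ01,
      (Vfg ρ) x = ∫ t in (0:ℝ)..x, (f (x - t) + g (x - t)) * ρ t)
    (hVcf : ∀ ρ : L2, ∀ᵐ x ∂μ01,
      (Vcf ρ) x = ∫ t in (0:ℝ)..x, (c * f (x - t)) * ρ t) :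
    ‖Vfg‖ ≤ ‖Vf‖ + ‖Vg‖ ∧ ‖Vcf‖ = ‖c‖ * ‖Vf‖ ∧
    ((∀ ρ : L2, Vf ρ = 0) → f =ᵐ[μ01] 0) := by
  have hVfg' : IsVolterraConvolution Vfg (f + g) := hVfg
  have hVcf' : IsVolterraConvolution Vcf (c • f) := hVcf
  have hsum : Vfg = Vf + Vg := hVfg'.unique (.add hVf hVg hf hg)
  have hsmul : Vcf = c • Vf := hVcf'.unique (.smul hVf c)
  refine ⟨hsum ▸ norm_add_le Vf Vg, hsmul ▸ norm_smul c Vf, fun hzero => ?_⟩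
  exact ae_restrict_Icc_eq_zero_of_integral_eq_zero
    ((intervalIntegrable_iff_integrableOn_Icc_of_le zero_le_one).2 hf)
    (IsVolterraConvolution.ae_integral_eq_zero hVf hzero)
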